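/- arXiv:1405.0854 — 9 statements merged into one kernel-verified Lean document; each statement's English description precedes it below -/
import Mathlib

section
/- In a complete Elgot monad, the Bekić identity holds: for g : X → T((Z + Y) + X) and f : Y → T((Z + Y) + X), setting h = [η, g†]* ∘ f : Y → T(Z + Y), one has (Tα ∘ [f, g])† = [η, h†]* ∘ [η ∘ inr, g†], where α : (A + B) + C → A + (B + C) is the coproduct associativity isomorphism and [-,-] denotes copairing along the coproduct Y + X. -/
/-!
Write `h = [η, g†]* ∘ f`. The associator factors as `(Z ⨿ Y) ⨿ X ⟶ (Z ⨿ (Y ⨿ X)) ⨿ (Y ⨿ X)`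
followed by the codiagonal, so the codiagonal law turns the left-hand side into a double
iteration. The inner iteration only loops through `X`: by uniformity along `coprod.inr` and
naturality it is `[h, g†]` followed by `Z ⨿ Y ⟶ Z ⨿ (Y ⨿ X)`. The outer iteration of such a map
never re-enters `X`, so dinaturality reduces it to an iteration over `Y` alone, which is `h†`.
-/

open CategoryTheory Limits

variable {C : Type*} [Category C] [HasBinaryCoproducts C]

/-- Kleisli extension of a monad. -/
def kl (T : Monad C) {X Y : C} (f : X ⟶ T.obj Y) : T.obj X ⟶ T.obj Y :=
  T.map f ≫ T.μ.app Y

section Kleisli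

variable {D : Type*} [Category D] (T : Monad D) {X Y Z : D}

lemma eta_comp_kl (k : X ⟶ T.obj Y) : T.η.app X ≫ kl T k = k := by
  rw [kl, ← Category.assoc, ← T.η.naturality k]
  simp

lemma kl_comp_eta (m : X ⟶ Y) : kl T (m ≫ T.η.app Y) = T.map m := by
  simp [kl]

lemma map_comp_kl (m : X ⟶ Y) (k : Y ⟶ T.obj Z) : T.map m ≫ kl T k = kl T (m ≫ k) := by
  simp [kl]

lemma kl_comp_map (k : X ⟶ T.obj Y) (m : Y ⟶ Z) :
    kl T k ≫ T.map m = kl T (k ≫ T.map m) := by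
  rw [kl, kl, Category.assoc, Functor.map_comp, Category.assoc, ← T.μ.naturality m]
  rfl

end Kleisli

lemma coprod_map_map_inl_inr_comp_desc (Z Y X : C) :
    coprod.map (coprod.map (𝟙 Z) coprod.inl) coprod.inr ≫
      coprod.desc (𝟙 (Z ⨿ (Y ⨿ X))) coprod.inr = (coprod.associator Z Y X).hom := by
  ext <;> simp [coprod.inl_desc, coprod.inr_desc]

section Iteration

variable (T : Monad C) (iter : ∀ {X Y : C}, (X ⟶ T.obj (Y ⨿ X)) → (X ⟶ T.obj Y))

def IterUnfolding : Prop :=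
  ∀ {X Y : C} (f : X ⟶ T.obj (Y ⨿ X)), f ≫ kl T (coprod.desc (T.η.app Y) (iter f)) = iter f

def IterNaturality : Prop :=
  ∀ {X Y Z : C} (f : X ⟶ T.obj (Y ⨿ X)) (g : Y ⟶ T.obj Z),
    iter f ≫ kl T g =
      iter (f ≫ kl T (coprod.desc (g ≫ T.map coprod.inl) (coprod.inr ≫ T.η.app (Z ⨿ X))))

def IterDinaturality : Prop :=
  ∀ {X Y Z : C} (g : X ⟶ T.obj (Y ⨿ Z)) (h : Z ⟶ T.obj (Y ⨿ X)),
    iter (g ≫ kl T (coprod.desc (coprod.inl ≫ T.η.app (Y ⨿ X)) h)) =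
      g ≫ kl T (coprod.desc (T.η.app Y)
        (iter (h ≫ kl T (coprod.desc (coprod.inl ≫ T.η.app (Y ⨿ Z)) g))))

def IterUniformity : Prop :=
  ∀ {X Y Z : C} (f : X ⟶ T.obj (Y ⨿ X)) (g : Z ⟶ T.obj (Y ⨿ Z)) (h : Z ⟶ X),
    h ≫ f = g ≫ T.map (coprod.map (𝟙 Y) h) → h ≫ iter f = iter g

variable {T iter}

-- `@iter` below: plain `iter` would be elaborated as `fun {X Y} => iter`, and the resulting
-- beta-redexes in the unfolded laws defeat `rw`.

lemma IterNaturality.iter_comp_map_coprod_map (naturality : IterNaturality T @iter)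
    {X Y Y' : C} (f : X ⟶ T.obj (Y ⨿ X)) (m : Y ⟶ Y') :
    iter (f ≫ T.map (coprod.map m (𝟙 X))) = iter f ≫ T.map m := by
  have hm : coprod.desc ((m ≫ T.η.app Y') ≫ T.map coprod.inl) (coprod.inr ≫ T.η.app (Y' ⨿ X)) =
      coprod.map m (𝟙 X) ≫ T.η.app (Y' ⨿ X) := by
    ext <;> simp [coprod.inl_desc, coprod.inr_desc, ← T.η.naturality]
  rw [← kl_comp_eta T m, naturality, hm, kl_comp_eta]

lemma IterDinaturality.iter_comp_map_coprod_map_inl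
    (dinaturality : IterDinaturality T @iter)
    {V W Z : C} (k : V ⨿ W ⟶ T.obj (Z ⨿ V)) :
    iter (k ≫ T.map (coprod.map (𝟙 Z) coprod.inl)) =
      k ≫ kl T (coprod.desc (T.η.app Z) (iter (coprod.inl ≫ k))) := by
  have hm : coprod.desc (coprod.inl ≫ T.η.app (Z ⨿ (V ⨿ W)))
      (coprod.inl ≫ coprod.inr ≫ T.η.app (Z ⨿ (V ⨿ W))) =
      coprod.map (𝟙 Z) coprod.inl ≫ T.η.app (Z ⨿ (V ⨿ W)) := by
    ext <;> simp [coprod.inl_desc, coprod.inr_desc]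
  have hd := dinaturality k (coprod.inl ≫ coprod.inr ≫ T.η.app (Z ⨿ (V ⨿ W)))
  rwa [hm, kl_comp_eta, Category.assoc, Category.assoc, eta_comp_kl, coprod.inr_desc] at hd

variable {Z Y X : C} (g : X ⟶ T.obj ((Z ⨿ Y) ⨿ X)) (f : Y ⟶ T.obj ((Z ⨿ Y) ⨿ X))

lemma inr_comp_iter_desc_comp_map_coprod_map
    (naturality : IterNaturality T @iter) (uniformity : IterUniformity T @iter) :
    coprod.inr ≫ iter (coprod.desc f g ≫
      T.map (coprod.map (coprod.map (𝟙 Z) (coprod.inl : Y ⟶ Y ⨿ X)) coprod.inr)) =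
        iter g ≫ T.map (coprod.map (𝟙 Z) coprod.inl) := by
  rw [← naturality.iter_comp_map_coprod_map]
  apply uniformity
  rw [coprod.inr_desc_assoc, Category.assoc, ← Functor.map_comp, coprod.map_map, Category.comp_id,
    Category.id_comp]

lemma iter_desc_comp_map_coprod_map (unfolding : IterUnfolding T @iter)
    (naturality : IterNaturality T @iter) (uniformity : IterUniformity T @iter) :
    iter (coprod.desc f g ≫
      T.map (coprod.map (coprod.map (𝟙 Z) (coprod.inl : Y ⟶ Y ⨿ X)) coprod.inr)) =
        coprod.desc (f ≫ kl T (coprod.desc (T.η.app (Z ⨿ Y)) (iter g))) (iter g) ≫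
          T.map (coprod.map (𝟙 Z) coprod.inl) := by
  have hinr := inr_comp_iter_desc_comp_map_coprod_map g f naturality uniformity
  apply coprod.hom_ext
  · rw [← unfolding, coprod.inl_desc_assoc, Category.assoc, map_comp_kl, coprod.inl_desc_assoc,
      Category.assoc, kl_comp_map]
    congr 2
    apply coprod.hom_ext
    · simp [coprod.inl_desc, ← T.η.naturality]
    · rw [coprod.inr_map_assoc, coprod.inr_desc, coprod.inr_desc_assoc]
      exact hinr
  · rw [coprod.inr_desc_assoc]
    exact hinr

end Iteration

/-- In a complete Elgot monad, the Bekić identity holds. -/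
theorem bekic_of_elgot (T : Monad C)
    (iter : ∀ {X Y : C}, (X ⟶ T.obj (Y ⨿ X)) → (X ⟶ T.obj Y))
    (unfolding : ∀ {X Y : C} (f : X ⟶ T.obj (Y ⨿ X)),
      f ≫ kl T (coprod.desc (T.η.app Y) (iter f)) = iter f)
    (naturality : ∀ {X Y Z : C} (f : X ⟶ T.obj (Y ⨿ X)) (g : Y ⟶ T.obj Z),
      iter f ≫ kl T g =
        iter (f ≫ kl T (coprod.desc (g ≫ T.map coprod.inl) (coprod.inr ≫ T.η.app (Z ⨿ X)))))
    (dinaturality : ∀ {X Y Z : C} (g : X ⟶ T.obj (Y ⨿ Z)) (h : Z ⟶ T.obj (Y ⨿ X)),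
      iter (g ≫ kl T (coprod.desc (coprod.inl ≫ T.η.app (Y ⨿ X)) h)) =
        g ≫ kl T (coprod.desc (T.η.app Y)
          (iter (h ≫ kl T (coprod.desc (coprod.inl ≫ T.η.app (Y ⨿ Z)) g)))))
    (codiagonal : ∀ {X Y : C} (g : X ⟶ T.obj ((Y ⨿ X) ⨿ X)),
      iter (g ≫ T.map (coprod.desc (𝟙 (Y ⨿ X)) coprod.inr)) = iter (iter g))
    (uniformity : ∀ {X Y Z : C} (f : X ⟶ T.obj (Y ⨿ X)) (g : Z ⟶ T.obj (Y ⨿ Z)) (h : Z ⟶ X),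
      h ≫ f = g ≫ T.map (coprod.map (𝟙 Y) h) → h ≫ iter f = iter g)
    {X Y Z : C} (g : X ⟶ T.obj ((Z ⨿ Y) ⨿ X)) (f : Y ⟶ T.obj ((Z ⨿ Y) ⨿ X)) :
    iter (coprod.desc f g ≫ T.map (coprod.associator Z Y X).hom) =
      coprod.desc (coprod.inr ≫ T.η.app (Z ⨿ Y)) (iter g) ≫
        kl T (coprod.desc (T.η.app Z)
          (iter (f ≫ kl T (coprod.desc (T.η.app (Z ⨿ Y)) (iter g))))) := by
  rw [← coprod_map_map_inl_inr_comp_desc, Functor.map_comp, ← Category.assoc, codiagonal,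
    iter_desc_comp_map_coprod_map g f unfolding naturality uniformity,
    IterDinaturality.iter_comp_map_coprod_map_inl dinaturality, coprod.inl_desc]
  ext
  · simp only [coprod.inl_desc_assoc, Category.assoc, eta_comp_kl, coprod.inr_desc]
    rw [← Category.assoc, unfolding]
  · simp only [coprod.inr_desc_assoc]
end

section
/- A monad T with an iteration operator † satisfying unfolding, naturality, uniformity, and the Bekić identity also satisfies the codiagonal axiom: for every k : X → T((Y + X) + X), (T[id, inr] ∘ k)† = (k†)†. -/
open CategoryTheory Limits

variable {C : Type*} [Category C] [HasBinaryCoproducts C]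

/-!
Uniformity along the codiagonal `X ⨿ X ⟶ X` identifies `(T[id, inr] ∘ k)†` with the restriction
to the left summand of the iteration of `[k, k]` (reassociated). The Bekić identity computes that
iteration with `f = g = k`; on the left summand it reduces to `(k ≫ [η, k†]*)†`, which is `(k†)†`
by unfolding.
-/

lemma eta_comp_kl_s1 {D : Type*} [Category D] (T : Monad D) {A B : D} (f : A ⟶ T.obj B) :
    T.η.app A ≫ kl T f = f := by
  simp [kl, ← T.η.naturality_assoc]

lemma coprod.desc_id_inr_eq_associator_comp_map_codiag (Y X : C) :
    coprod.desc (𝟙 (Y ⨿ X)) coprod.inr =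
      (coprod.associator Y X X).hom ≫ coprod.map (𝟙 Y) (codiag X) := by
  ext <;> simp [coprod.inl_desc, coprod.inr_desc]

theorem codiagonal_of_bekic_general (T : Monad C)
    (iter : ∀ {X Y : C}, (X ⟶ T.obj (Y ⨿ X)) → (X ⟶ T.obj Y))
    (unfolding : ∀ {X Y : C} (f : X ⟶ T.obj (Y ⨿ X)),
      f ≫ kl T (coprod.desc (T.η.app Y) (iter f)) = iter f)
    (uniformity : ∀ {X Y Z : C} (f : X ⟶ T.obj (Y ⨿ X)) (g : Z ⟶ T.obj (Y ⨿ Z)) (h : Z ⟶ X),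
      h ≫ f = g ≫ T.map (coprod.map (𝟙 Y) h) → h ≫ iter f = iter g)
    (bekic : ∀ {X Y Z : C} (g : X ⟶ T.obj ((Z ⨿ Y) ⨿ X)) (f : Y ⟶ T.obj ((Z ⨿ Y) ⨿ X)),
      iter (coprod.desc f g ≫ T.map (coprod.associator Z Y X).hom) =
        coprod.desc (coprod.inr ≫ T.η.app (Z ⨿ Y)) (iter g) ≫
          kl T (coprod.desc (T.η.app Z)
            (iter (f ≫ kl T (coprod.desc (T.η.app (Z ⨿ Y)) (iter g))))))
    {X Y : C} (k : X ⟶ T.obj ((Y ⨿ X) ⨿ X)) :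
    iter (k ≫ T.map (coprod.desc (𝟙 (Y ⨿ X)) coprod.inr)) = iter (iter k) := by
  have square : codiag X ≫ k ≫ T.map (coprod.desc (𝟙 (Y ⨿ X)) coprod.inr) =
      (coprod.desc k k ≫ T.map (coprod.associator Y X X).hom) ≫
        T.map (coprod.map (𝟙 Y) (codiag X)) := by
    rw [coprod.desc_id_inr_eq_associator_comp_map_codiag, T.map_comp, ← Category.assoc,
      coprod.diag_comp, Category.assoc]
  calc iter (k ≫ T.map (coprod.desc (𝟙 (Y ⨿ X)) coprod.inr))
      = coprod.inl ≫ codiag X ≫ iter (k ≫ T.map (coprod.desc (𝟙 (Y ⨿ X)) coprod.inr)) := by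
        simp [coprod.inl_desc]
    _ = coprod.inl ≫ iter (coprod.desc k k ≫ T.map (coprod.associator Y X X).hom) := by
        rw [uniformity _ _ _ square]
    _ = iter (k ≫ kl T (coprod.desc (T.η.app (Y ⨿ X)) (iter k))) := by
        rw [bekic, coprod.inl_desc_assoc, Category.assoc, eta_comp_kl_s1, coprod.inr_desc]
    _ = iter (iter k) := by rw [unfolding]

/-- A monad with an iteration operator satisfying unfolding, naturality, uniformity
and the Bekić identity also satisfies the codiagonal axiom. -/
theorem codiagonal_of_bekic (T : Monad C)
    (iter : ∀ {X Y : C}, (X ⟶ T.obj (Y ⨿ X)) → (X ⟶ T.obj Y))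
    (unfolding : ∀ {X Y : C} (f : X ⟶ T.obj (Y ⨿ X)),
      f ≫ kl T (coprod.desc (T.η.app Y) (iter f)) = iter f)
    (naturality : ∀ {X Y Z : C} (f : X ⟶ T.obj (Y ⨿ X)) (g : Y ⟶ T.obj Z),
      iter f ≫ kl T g =
        iter (f ≫ kl T (coprod.desc (g ≫ T.map coprod.inl) (coprod.inr ≫ T.η.app (Z ⨿ X)))))
    (uniformity : ∀ {X Y Z : C} (f : X ⟶ T.obj (Y ⨿ X)) (g : Z ⟶ T.obj (Y ⨿ Z)) (h : Z ⟶ X),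
      h ≫ f = g ≫ T.map (coprod.map (𝟙 Y) h) → h ≫ iter f = iter g)
    (bekic : ∀ {X Y Z : C} (g : X ⟶ T.obj ((Z ⨿ Y) ⨿ X)) (f : Y ⟶ T.obj ((Z ⨿ Y) ⨿ X)),
      iter (coprod.desc f g ≫ T.map (coprod.associator Z Y X).hom) =
        coprod.desc (coprod.inr ≫ T.η.app (Z ⨿ Y)) (iter g) ≫
          kl T (coprod.desc (T.η.app Z)
            (iter (f ≫ kl T (coprod.desc (T.η.app (Z ⨿ Y)) (iter g))))))
    {X Y : C} (k : X ⟶ T.obj ((Y ⨿ X) ⨿ X)) :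
    iter (k ≫ T.map (coprod.desc (𝟙 (Y ⨿ X)) coprod.inr)) = iter (iter k) :=
  codiagonal_of_bekic_general T iter unfolding uniformity bekic k
end

section
/- In a complete Elgot monad, Kleisli composition can be expressed via iteration: for f : X → TY and g : Y → TZ, one has g* ∘ f = [T(inr ∘ inr) ∘ f, T inl ∘ g]† ∘ inl, where the equation morphism [T(inr ∘ inr) ∘ f, T inl ∘ g] : X + Y → T(Z + (X + Y)) is formed by copairing. -/
open CategoryTheory Limits

variable {C : Type*} [Category C] [HasBinaryCoproducts C]

/-- In a complete Elgot monad, Kleisli composition is expressible via iteration: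
g* ∘ f = [T(inr ∘ inr) ∘ f, T inl ∘ g]† ∘ inl. -/
theorem kleisli_via_iteration (T : Monad C)
    (iter : ∀ {X Y : C}, (X ⟶ T.obj (Y ⨿ X)) → (X ⟶ T.obj Y))
    (unfolding : ∀ {X Y : C} (f : X ⟶ T.obj (Y ⨿ X)),
      f ≫ kl T (coprod.desc (T.η.app Y) (iter f)) = iter f)
    (naturality : ∀ {X Y Z : C} (f : X ⟶ T.obj (Y ⨿ X)) (g : Y ⟶ T.obj Z),
      iter f ≫ kl T g =
        iter (f ≫ kl T (coprod.desc (g ≫ T.map coprod.inl) (coprod.inr ≫ T.η.app (Z ⨿ X)))))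
    (dinaturality : ∀ {X Y Z : C} (g : X ⟶ T.obj (Y ⨿ Z)) (h : Z ⟶ T.obj (Y ⨿ X)),
      iter (g ≫ kl T (coprod.desc (coprod.inl ≫ T.η.app (Y ⨿ X)) h)) =
        g ≫ kl T (coprod.desc (T.η.app Y)
          (iter (h ≫ kl T (coprod.desc (coprod.inl ≫ T.η.app (Y ⨿ Z)) g)))))
    (codiagonal : ∀ {X Y : C} (g : X ⟶ T.obj ((Y ⨿ X) ⨿ X)),
      iter (g ≫ T.map (coprod.desc (𝟙 (Y ⨿ X)) coprod.inr)) = iter (iter g))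
    (uniformity : ∀ {X Y Z : C} (f : X ⟶ T.obj (Y ⨿ X)) (g : Z ⟶ T.obj (Y ⨿ Z)) (h : Z ⟶ X),
      h ≫ f = g ≫ T.map (coprod.map (𝟙 Y) h) → h ≫ iter f = iter g)
    {X Y Z : C} (f : X ⟶ T.obj Y) (g : Y ⟶ T.obj Z) :
    f ≫ kl T g =
      coprod.inl ≫
        iter (coprod.desc (f ≫ T.map (coprod.inr ≫ coprod.inr)) (g ≫ T.map coprod.inl)) := by
  set w : X ⨿ Y ⟶ T.obj (Z ⨿ (X ⨿ Y)) := coprod.desc (f ≫ T.map (coprod.inr ≫ coprod.inr)) (g ≫ T.map coprod.inl) with hw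
  have hu := unfolding w
  have hg : coprod.inr ≫ iter w = g := by
    rw [← hu, hw]
    simp only [coprod.inr_desc_assoc, kl, Category.assoc]
    rw [← T.map_comp_assoc, coprod.inl_desc, T.right_unit]
    simp
  have hf : f ≫ kl T g = coprod.inl ≫ iter w := by
    rw [← hu, hw]
    simp only [coprod.inl_desc_assoc, kl, Category.assoc]
    rw [← T.map_comp_assoc, Category.assoc, coprod.inr_desc, hg]
  exact hf
end

section
/- In a complete Elgot monad, for every f : X → T(Y + X) one has [η, f†]* = (T(id + f))†, where T(id + f) : T(Y + X) → T(Y + T(Y + X)) is regarded as an equation morphism on object T(Y + X) with parameters Y. -/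
open CategoryTheory Limits

variable {C : Type*} [Category C] [HasBinaryCoproducts C]

/-- In a complete Elgot monad, [η, f†]* = (T(id + f))†. -/
theorem klstar_eq_iter_map (T : Monad C)
    (iter : ∀ {X Y : C}, (X ⟶ T.obj (Y ⨿ X)) → (X ⟶ T.obj Y))
    (unfolding : ∀ {X Y : C} (f : X ⟶ T.obj (Y ⨿ X)),
      f ≫ kl T (coprod.desc (T.η.app Y) (iter f)) = iter f)
    (naturality : ∀ {X Y Z : C} (f : X ⟶ T.obj (Y ⨿ X)) (g : Y ⟶ T.obj Z),
      iter f ≫ kl T g =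
        iter (f ≫ kl T (coprod.desc (g ≫ T.map coprod.inl) (coprod.inr ≫ T.η.app (Z ⨿ X)))))
    (dinaturality : ∀ {X Y Z : C} (g : X ⟶ T.obj (Y ⨿ Z)) (h : Z ⟶ T.obj (Y ⨿ X)),
      iter (g ≫ kl T (coprod.desc (coprod.inl ≫ T.η.app (Y ⨿ X)) h)) =
        g ≫ kl T (coprod.desc (T.η.app Y)
          (iter (h ≫ kl T (coprod.desc (coprod.inl ≫ T.η.app (Y ⨿ Z)) g)))))
    (codiagonal : ∀ {X Y : C} (g : X ⟶ T.obj ((Y ⨿ X) ⨿ X)),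
      iter (g ≫ T.map (coprod.desc (𝟙 (Y ⨿ X)) coprod.inr)) = iter (iter g))
    (uniformity : ∀ {X Y Z : C} (f : X ⟶ T.obj (Y ⨿ X)) (g : Z ⟶ T.obj (Y ⨿ Z)) (h : Z ⟶ X),
      h ≫ f = g ≫ T.map (coprod.map (𝟙 Y) h) → h ≫ iter f = iter g)
    {X Y : C} (f : X ⟶ T.obj (Y ⨿ X)) :
    kl T (coprod.desc (T.η.app Y) (iter f)) = iter (T.map (coprod.map (𝟙 Y) f)) := by
  have h1 : f ≫ iter (T.map (coprod.map (𝟙 Y) f)) = iter f :=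
    uniformity (T.map (coprod.map (𝟙 Y) f)) f f rfl
  conv_rhs => rw [← unfolding (T.map (coprod.map (𝟙 Y) f))]
  unfold kl
  rw [← Category.assoc, ← T.map_comp]
  congr 2
  apply coprod.hom_ext <;> simp [h1]
end

section
/- The maybe monad (option monad) L X = X + 1 on Set, with iteration defined by: for e : X → (Y + X) + 1, e†(x) = some(y) if iterating e from x eventually reaches a value inl(y) ∈ Y, and e†(x) = none if iterating e from x either hits none or continues in X forever, satisfies all axioms of a complete Elgot monad (unfolding, naturality, dinaturality, codiagonal, uniformity). -/
/-- Iterating `e` from `x` eventually reaches the result `y ∈ Y`. -/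
inductive Reaches {X Y : Type} (e : X → Option (Y ⊕ X)) : X → Y → Prop
  | done {x : X} {y : Y} : e x = some (Sum.inl y) → Reaches e x y
  | step {x x' : X} {y : Y} : e x = some (Sum.inr x') → Reaches e x' y → Reaches e x y

/-- Iteration for the option monad: `optIter e x = some y` if iterating `e` from `x`
eventually reaches a value `inl y`, and `none` otherwise (i.e. if iteration hits
`none` or continues in `X` forever). -/
noncomputable def optIter {X Y : Type} (e : X → Option (Y ⊕ X)) (x : X) : Option Y :=
  @dite _ (∃ y, Reaches e x y) (Classical.propDecidable _)
    (fun h => some h.choose) (fun _ => none)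

/-! The iterate `optIter e x` is `some y` exactly when `Reaches e x y`, and `Reaches e x` relates
`x` to at most one result. So each axiom, an equation between `Option`-valued maps, reduces
pointwise to an equivalence of reachability relations, proved by induction on derivations. -/

section Reaches

variable {X Y : Type} {e : X → Option (Y ⊕ X)}

theorem reaches_iff {x : X} {y : Y} :
    Reaches e x y ↔ e x = some (.inl y) ∨ ∃ x', e x = some (.inr x') ∧ Reaches e x' y := by
  constructor
  · rintro (h | ⟨h, hr⟩)
    · exact .inl h
    · exact .inr ⟨_, h, hr⟩
  · rintro (h | ⟨x', h, hr⟩)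
    · exact .done h
    · exact .step h hr

theorem reaches_congr {x x' : X} {y : Y} (h : e x = e x') : Reaches e x y ↔ Reaches e x' y := by
  rw [reaches_iff, reaches_iff (x := x'), h]

theorem Reaches.unique {x : X} {y y' : Y} (h : Reaches e x y) (h' : Reaches e x y') :
    y = y' := by
  induction h with
  | done hx => rcases reaches_iff.1 h' with hx' | ⟨_, hx', _⟩ <;> simp_all
  | step hx _ ih =>
    rcases reaches_iff.1 h' with hx' | ⟨_, hx', hr⟩
    · simp_all
    · rw [hx, Option.some_inj, Sum.inr_injective.eq_iff] at hx'
      exact ih (hx' ▸ hr)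

theorem optIter_eq_some_iff {x : X} {y : Y} : optIter e x = some y ↔ Reaches e x y := by
  unfold optIter
  split_ifs with h
  · exact ⟨fun hy => Option.some_injective _ hy ▸ h.choose_spec,
      fun hr => congrArg some (h.choose_spec.unique hr)⟩
  · exact ⟨nofun, fun hr => (h ⟨y, hr⟩).elim⟩

end Reaches

theorem optIter_unfold {X Y : Type} (e : X → Option (Y ⊕ X)) :
    (fun x => (e x).bind (Sum.elim some (optIter e))) = optIter e := by
  funext x
  ext y
  simp only [Option.bind_eq_some_iff, Sum.exists, Sum.elim_inl, Sum.elim_inr, Option.some_inj,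
    optIter_eq_some_iff, exists_eq_right]
  exact reaches_iff.symm


section Naturality

variable {X Y Z : Type} (f : X → Option (Y ⊕ X)) (g : Y → Option Z)

theorem reaches_kleisli_iff {x : X} {z : Z} :
    Reaches (fun x => (f x).bind
      (Sum.elim (fun y => (g y).bind fun z => some (Sum.inl z)) (fun x' => some (Sum.inr x'))))
      x z ↔ ∃ y, Reaches f x y ∧ g y = some z := by
  constructor
  · intro h
    induction h with
    | done hx =>
      simp only [Option.bind_eq_some_iff, Sum.exists, Sum.elim_inl, Sum.elim_inr, Option.some_inj,
        Sum.inl_injective.eq_iff, reduceCtorEq, and_false, exists_false, or_false,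
        exists_eq_right] at hx
      obtain ⟨y, hf, hg⟩ := hx
      exact ⟨y, .done hf, hg⟩
    | step hx _ ih =>
      simp only [Option.bind_eq_some_iff, Sum.exists, Sum.elim_inl, Sum.elim_inr, Option.some_inj,
        Sum.inr_injective.eq_iff, reduceCtorEq, and_false, exists_false, false_or,
        exists_eq_right] at hx
      obtain ⟨y, hr, hg⟩ := ih
      exact ⟨y, .step hx hr, hg⟩
  · rintro ⟨y, hr, hg⟩
    induction hr with
    | done hx => exact .done (by simp [hx, hg])
    | step hx _ ih => exact .step (by simp [hx]) (ih hg)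

theorem optIter_bind :
    (fun x => (optIter f x).bind g) =
      optIter fun x => (f x).bind
        (Sum.elim (fun y => (g y).bind fun z => some (Sum.inl z))
          (fun x' => some (Sum.inr x'))) := by
  funext x
  ext z
  simp only [Option.bind_eq_some_iff, optIter_eq_some_iff, reaches_kleisli_iff]

end Naturality

section Dinaturality

variable {X Y Z : Type}

theorem Reaches.cases_bind_elim {g : X → Option (Y ⊕ Z)} {h : Z → Option (Y ⊕ X)}
    {x : X} {y : Y}
    (hr : Reaches (fun x => (g x).bind (Sum.elim (fun y => some (Sum.inl y)) h)) x y) :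
    g x = some (.inl y) ∨ ∃ z, g x = some (.inr z) ∧
      Reaches (fun z => (h z).bind (Sum.elim (fun y => some (Sum.inl y)) g)) z y := by
  induction hr with
  | done hx =>
    simp only [Option.bind_eq_some_iff, Sum.exists, Sum.elim_inl, Sum.elim_inr, Option.some_inj,
      Sum.inl_injective.eq_iff, exists_eq_right] at hx
    rcases hx with hx | ⟨z, hx, hz⟩
    · exact .inl hx
    · exact .inr ⟨z, hx, .done (by simp [hz])⟩
  | step hx _ ih =>
    simp only [Option.bind_eq_some_iff, Sum.exists, Sum.elim_inl, Sum.elim_inr, Option.some_inj,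
      reduceCtorEq, and_false, exists_false, false_or] at hx
    obtain ⟨z, hx, hz⟩ := hx
    refine .inr ⟨z, hx, ?_⟩
    rcases ih with hx' | ⟨z', hx', hr⟩
    · exact .done (by simp [hz, hx'])
    · exact .step (by simp [hz, hx']) hr

theorem optIter_bind_elim (g : X → Option (Y ⊕ Z)) (h : Z → Option (Y ⊕ X)) :
    optIter (fun x => (g x).bind (Sum.elim (fun y => some (Sum.inl y)) h)) =
      fun x => (g x).bind (Sum.elim some
        (optIter fun z => (h z).bind (Sum.elim (fun y => some (Sum.inl y)) g))) := by
  funext x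
  ext y
  simp only [Option.bind_eq_some_iff, Sum.exists, Sum.elim_inl, Sum.elim_inr, Option.some_inj,
    optIter_eq_some_iff, exists_eq_right]
  refine ⟨Reaches.cases_bind_elim, ?_⟩
  rintro (hx | ⟨z, hx, hr⟩)
  · exact .done (by simp [hx])
  -- the same case split, with the roles of `g` and `h` exchanged
  · rcases Reaches.cases_bind_elim hr with hz | ⟨x', hz, hr'⟩
    · exact .done (by simp [hx, hz])
    · exact .step (by simp [hx, hz]) hr'

end Dinaturality

section Codiagonal

variable {X Y : Type} (g : X → Option ((Y ⊕ X) ⊕ X))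

theorem reaches_flatten_of_reaches {x : X} {v : Y ⊕ X} {y : Y} (hv : Reaches g x v)
    (hy : v = .inl y ∨ ∃ x', v = .inr x' ∧
      Reaches (fun x => (g x).bind fun w => some (Sum.elim id Sum.inr w)) x' y) :
    Reaches (fun x => (g x).bind fun w => some (Sum.elim id Sum.inr w)) x y := by
  induction hv with
  | done hx =>
    rcases hy with rfl | ⟨x', rfl, hr⟩
    · exact .done (by simp [hx])
    · exact .step (by simp [hx]) hr
  | step hx _ ih => exact .step (by simp [hx]) (ih hy)

theorem reaches_flatten_iff {x : X} {y : Y} :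
    Reaches (fun x => (g x).bind fun w => some (Sum.elim id Sum.inr w)) x y ↔
      Reaches (optIter g) x y := by
  constructor
  · intro hr
    induction hr with
    | done hx =>
      simp only [Option.bind_eq_some_iff, Sum.exists, Sum.elim_inl, Sum.elim_inr, id_eq,
        Option.some_inj, reduceCtorEq, and_false, exists_false, or_false, exists_eq_right] at hx
      exact .done (optIter_eq_some_iff.2 (.done hx))
    | @step x x' y hx _ ih =>
      simp only [Option.bind_eq_some_iff, Sum.exists, Sum.elim_inl, Sum.elim_inr, id_eq,
        Option.some_inj, exists_eq_right, Sum.inr_injective.eq_iff] at hx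
      rcases hx with hx | hx
      · exact .step (optIter_eq_some_iff.2 (.done hx)) ih
      · have hxx' : optIter g x = optIter g x' :=
          (congrFun (optIter_unfold g) x).symm.trans (by simp [hx])
        exact (reaches_congr hxx').2 ih
  · intro hr
    induction hr with
    | done hx => exact reaches_flatten_of_reaches g (optIter_eq_some_iff.1 hx) (.inl rfl)
    | step hx _ ih =>
      exact reaches_flatten_of_reaches g (optIter_eq_some_iff.1 hx) (.inr ⟨_, rfl, ih⟩)

theorem optIter_flatten :
    optIter (fun x => (g x).bind fun w => some (Sum.elim id Sum.inr w)) = optIter (optIter g) := by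
  funext x
  ext y
  simp only [optIter_eq_some_iff, reaches_flatten_iff]

end Codiagonal

section Uniformity

variable {A B X : Type} {f : A → Option (X ⊕ A)} {g : B → Option (X ⊕ B)} {h : B → A}

theorem reaches_comp_of_reaches (hc : ∀ b, f (h b) = (g b).bind fun w => some (Sum.map id h w))
    {b : B} {x : X} (hr : Reaches g b x) : Reaches f (h b) x := by
  induction hr with
  | done hb => exact .done (by simp [hc, hb])
  | step hb _ ih => exact .step (by simp [hc, hb]) ih

theorem reaches_of_reaches_comp (hc : ∀ b, f (h b) = (g b).bind fun w => some (Sum.map id h w))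
    {b : B} {x : X} (hr : Reaches f (h b) x) : Reaches g b x := by
  generalize ha : h b = a at hr
  induction hr generalizing b with
  | done hx =>
    subst ha
    simp only [hc, Option.bind_eq_some_iff, Option.some_inj, Sum.exists, Sum.map_inl, Sum.map_inr,
      Sum.inl_injective.eq_iff, id_eq, exists_eq_right, reduceCtorEq, and_false, exists_false,
      or_false] at hx
    exact .done hx
  | step hx _ ih =>
    subst ha
    simp only [hc, Option.bind_eq_some_iff, Option.some_inj, Sum.exists, Sum.map_inl, Sum.map_inr,
      reduceCtorEq, and_false, exists_false, false_or, Sum.inr_injective.eq_iff] at hx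
    obtain ⟨b', hb, rfl⟩ := hx
    exact .step hb (ih rfl)

theorem optIter_comp_eq_of_map_comp
    (hc : ∀ b, f (h b) = (g b).bind fun w => some (Sum.map id h w)) (b : B) :
    optIter f (h b) = optIter g b :=
  Option.ext fun x => by
    rw [optIter_eq_some_iff, optIter_eq_some_iff]
    exact ⟨reaches_of_reaches_comp hc, reaches_comp_of_reaches hc⟩

end Uniformity

/-- The option monad on `Set`, with the above iteration, satisfies all the axioms of a
complete Elgot monad: unfolding, naturality, dinaturality, codiagonal, uniformity. -/
theorem option_isElgot :
    -- unfolding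
    (∀ {X Y : Type} (e : X → Option (Y ⊕ X)),
      (fun x => (e x).bind (Sum.elim some (optIter e))) = optIter e) ∧
    -- naturality
    (∀ {X Y Z : Type} (f : X → Option (Y ⊕ X)) (g : Y → Option Z),
      (fun x => (optIter f x).bind g) =
        optIter fun x => (f x).bind
          (Sum.elim (fun y => (g y).bind fun z => some (Sum.inl z))
            (fun x' => some (Sum.inr x')))) ∧
    -- dinaturality
    (∀ {X Y Z : Type} (g : X → Option (Y ⊕ Z)) (h : Z → Option (Y ⊕ X)),
      optIter (fun x => (g x).bind (Sum.elim (fun y => some (Sum.inl y)) h)) =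
        fun x => (g x).bind (Sum.elim some
          (optIter fun z => (h z).bind (Sum.elim (fun y => some (Sum.inl y)) g)))) ∧
    -- codiagonal
    (∀ {X Y : Type} (g : X → Option ((Y ⊕ X) ⊕ X)),
      optIter (fun x => (g x).bind fun w => some (Sum.elim id Sum.inr w)) =
        optIter (optIter g)) ∧
    -- uniformity
    (∀ {A B X : Type} (f : A → Option (X ⊕ A)) (g : B → Option (X ⊕ B)) (h : B → A),
      (∀ b, f (h b) = (g b).bind fun w => some (Sum.map id h w)) →
      ∀ b, optIter f (h b) = optIter g b) :=
  ⟨optIter_unfold, optIter_bind, optIter_bind_elim, optIter_flatten,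
    fun _ _ _ => optIter_comp_eq_of_map_comp⟩
end

section
/- The option monad L X = X + 1 on Set, with least-fixpoint iteration, is initial among complete Elgot monads on Set: for every complete Elgot monad S on Set there exists a unique complete Elgot monad morphism ξ : L → S, namely ξ = [η, ⊥] where ⊥ = (η ∘ inr)† is the unproductive divergence of S. -/
/-- A complete Elgot monad on `Set`: a monad together with an iteration operator
satisfying unfolding, naturality, dinaturality, codiagonal and uniformity. -/
structure ElgotSetMonad where
  T : Type → Type
  pure : ∀ {X : Type}, X → T X
  bind : ∀ {X Y : Type}, T X → (X → T Y) → T Y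
  pure_bind : ∀ {X Y : Type} (x : X) (f : X → T Y), bind (pure x) f = f x
  bind_pure : ∀ {X : Type} (t : T X), bind t pure = t
  bind_assoc : ∀ {X Y Z : Type} (t : T X) (f : X → T Y) (g : Y → T Z),
    bind (bind t f) g = bind t fun x => bind (f x) g
  iter : ∀ {X Y : Type}, (X → T (Y ⊕ X)) → (X → T Y)
  unfolding : ∀ {X Y : Type} (f : X → T (Y ⊕ X)) (x : X),
    bind (f x) (Sum.elim pure (iter f)) = iter f x
  naturality : ∀ {X Y Z : Type} (f : X → T (Y ⊕ X)) (g : Y → T Z) (x : X),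
    bind (iter f x) g =
      iter (fun x' => bind (f x')
        (Sum.elim (fun y => bind (g y) fun z => pure (Sum.inl z))
          (fun x'' => pure (Sum.inr x'')))) x
  dinaturality : ∀ {X Y Z : Type} (g : X → T (Y ⊕ Z)) (h : Z → T (Y ⊕ X)) (x : X),
    iter (fun x' => bind (g x') (Sum.elim (fun y => pure (Sum.inl y)) h)) x =
      bind (g x) (Sum.elim pure
        (iter fun z => bind (h z) (Sum.elim (fun y => pure (Sum.inl y)) g)))
  codiagonal : ∀ {X Y : Type} (g : X → T ((Y ⊕ X) ⊕ X)) (x : X),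
    iter (fun x' => bind (g x') fun w => pure (Sum.elim id Sum.inr w)) x = iter (iter g) x
  uniformity : ∀ {A B X : Type} (f : A → T (X ⊕ A)) (g : B → T (X ⊕ B)) (h : B → A),
    (∀ b, f (h b) = bind (g b) fun w => pure (Sum.map id h w)) →
    ∀ b, iter f (h b) = iter g b

/-- Unproductive divergence ⊥ of a complete Elgot monad (at object X). -/
def ElgotSetMonad.divergence (S : ElgotSetMonad) (X : Type) : S.T X :=
  S.iter (X := PUnit) (fun _ => S.pure (Sum.inr PUnit.unit)) PUnit.unit

/-- `ξ` is a complete Elgot monad morphism from the option monad to `S`. -/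
def IsElgotMorphism (S : ElgotSetMonad) (ξ : ∀ X : Type, Option X → S.T X) : Prop :=
  (∀ (X : Type) (x : X), ξ X (some x) = S.pure x) ∧
  (∀ (X Y : Type) (t : Option X) (f : X → Option Y),
    ξ Y (t.bind f) = S.bind (ξ X t) fun x => ξ Y (f x)) ∧
  (∀ (X Y : Type) (g : X → Option (Y ⊕ X)) (x : X),
    S.iter (fun x' => ξ (Y ⊕ X) (g x')) x = ξ Y (optIter g x))

-- Auxiliary lemmas

lemma bind_div (S : ElgotSetMonad) {X Z : Type} (g : X → S.T Z) :
    S.bind (S.divergence X) g = S.divergence Z := by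
  unfold ElgotSetMonad.divergence
  rw [S.naturality]
  congr 1
  funext u
  rw [S.pure_bind]
  rfl

lemma iter_selfloop (S : ElgotSetMonad) {A X : Type} (f : A → S.T (X ⊕ A)) (a : A)
    (h : f a = S.pure (Sum.inr a)) : S.iter f a = S.divergence X := by
  have := S.uniformity f (fun _ : PUnit => S.pure (Sum.inr PUnit.unit)) (fun _ => a)
    (fun b => by rw [S.pure_bind, h]; rfl) PUnit.unit
  exact this

lemma iter_div_entry (S : ElgotSetMonad) {A X : Type} (f : A → S.T (X ⊕ A)) (a : A)
    (h : f a = S.divergence (X ⊕ A)) : S.iter f a = S.divergence X := by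
  rw [← S.unfolding, h, bind_div]

lemma iter_allinr (S : ElgotSetMonad) {A X : Type} (f : A → S.T (X ⊕ A))
    (h : ∀ a, ∃ a', f a = S.pure (Sum.inr a')) (a : A) :
    S.iter f a = S.divergence X := by
  have := S.uniformity (fun _ : PUnit => S.pure (Sum.inr PUnit.unit)) f (fun _ => PUnit.unit)
    (fun b => by obtain ⟨a', ha⟩ := h b; rw [ha, S.pure_bind]; rfl) a
  exact this.symm

lemma iter_nxt_div (S : ElgotSetMonad) {Y B : Type} (nxt : B → Option B) (b : B) :
    S.iter (fun b => (nxt b).elim (S.divergence (Y ⊕ B)) (fun b' => S.pure (Sum.inr b'))) b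
      = S.divergence Y := by
  set gB : B → S.T (Y ⊕ B) :=
    fun b => (nxt b).elim (S.divergence (Y ⊕ B)) (fun b' => S.pure (Sum.inr b')) with hgB
  set k : B → S.T ((Y ⊕ B) ⊕ B) :=
    fun b => (nxt b).elim (S.pure (Sum.inr b)) (fun b' => S.pure (Sum.inl (Sum.inr b'))) with hk
  have hik : S.iter k = gB := by
    funext c
    cases hnc : nxt c with
    | none =>
        rw [iter_selfloop S k c (by simp [hk, hnc])]
        simp [hgB, hnc]
    | some c' =>
        rw [← S.unfolding]
        simp [hk, hgB, hnc, S.pure_bind]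
  calc S.iter gB b = S.iter (S.iter k) b := by rw [hik]
    _ = S.iter (fun b => S.bind (k b) fun w => S.pure (Sum.elim id Sum.inr w)) b :=
        (S.codiagonal k b).symm
    _ = S.divergence Y := by
        apply iter_allinr
        intro c
        cases hnc : nxt c with
        | none => exact ⟨c, by simp [hk, hnc, S.pure_bind]⟩
        | some c' => exact ⟨c', by simp [hk, hnc, S.pure_bind]⟩

lemma reaches_unique {X Y : Type} {e : X → Option (Y ⊕ X)} {x : X} {y y' : Y}
    (h : Reaches e x y) (h' : Reaches e x y') : y = y' := by
  induction h with
  | done hx =>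
      cases h' with
      | done hx' => rw [hx] at hx'; simp_all
      | step hx' _ => rw [hx] at hx'; simp_all
  | step hx _ ih =>
      cases h' with
      | done hx' => rw [hx] at hx'; simp_all
      | step hx' hr' =>
          rw [hx] at hx'
          obtain rfl : _ = _ := by simpa using hx'
          exact ih hr'

lemma no_reaches_const_inr {X : Type} : ∀ {u : PUnit} {y : X},
    ¬ Reaches (fun _ : PUnit => (some (Sum.inr PUnit.unit) : Option (X ⊕ PUnit))) u y := by
  intro u y h
  induction h with
  | done hx => simp at hx
  | step _ _ ih => exact ih

lemma iter_of_reaches (S : ElgotSetMonad) {X Y : Type} {g : X → Option (Y ⊕ X)} {x : X} {y : Y}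
    (h : Reaches g x y) :
    S.iter (fun x' => Option.elim (g x') (S.divergence (Y ⊕ X)) S.pure) x = S.pure y := by
  induction h with
  | done hx => rw [← S.unfolding]; simp [hx, S.pure_bind]
  | step hx _ ih => rw [← S.unfolding]; simp [hx, S.pure_bind]; exact ih

/-- The option monad is the initial complete Elgot monad on `Set`: for every complete
Elgot monad `S` there is a unique complete Elgot monad morphism ξ : Option → S,
namely ξ = [η, ⊥]. -/
theorem option_initial_elgot (S : ElgotSetMonad) :
    IsElgotMorphism S (fun X t => Option.elim t (S.divergence X) S.pure) ∧
    ∀ ξ : ∀ X : Type, Option X → S.T X, IsElgotMorphism S ξ →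
      ξ = fun X t => Option.elim t (S.divergence X) S.pure := by
  constructor
  · refine ⟨fun X x => rfl, ?_, ?_⟩
    · intro X Y t f
      cases t with
      | none => simp [bind_div]
      | some x => simp [S.pure_bind]
    · intro X Y g x
      by_cases hex : ∃ y, Reaches g x y
      · obtain ⟨y, hy⟩ := hex
        have h1 : optIter g x = some y := by
          have hex' : ∃ y, Reaches g x y := ⟨y, hy⟩
          simp only [optIter, dif_pos hex']
          exact congrArg some (reaches_unique hex'.choose_spec hy)
        rw [h1]
        exact iter_of_reaches S hy
      · have h1 : optIter g x = none := by simp only [optIter, dif_neg hex]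
        rw [h1]
        -- uniformity onto the subtype of non-reaching states
        set B := {x' : X // ¬ ∃ y, Reaches g x' y} with hB
        have hstep : ∀ (b : B) (x' : X), g b.val = some (Sum.inr x') →
            ¬ ∃ y, Reaches g x' y := by
          rintro b x' hgb ⟨y, hy⟩
          exact b.prop ⟨y, Reaches.step hgb hy⟩
        set nxt : B → Option B := fun b =>
          match g b.val with
          | some (Sum.inr x') => @dite _ (∃ y, Reaches g x' y) (Classical.propDecidable _)
              (fun _ => none) (fun h => some ⟨x', h⟩)
          | _ => none with hnxt
        have huni := S.uniformity (fun x' => Option.elim (g x') (S.divergence (Y ⊕ X)) S.pure)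
          (fun b => (nxt b).elim (S.divergence (Y ⊕ B)) (fun b' => S.pure (Sum.inr b')))
          Subtype.val ?_ ⟨x, hex⟩
        · rw [huni, iter_nxt_div]
          rfl
        · intro b
          cases hgb : g b.val with
          | none =>
              have : nxt b = none := by simp [hnxt, hgb]
              simp [hgb, this, bind_div]
          | some w =>
              cases w with
              | inl y => exact absurd ⟨y, Reaches.done hgb⟩ b.prop
              | inr x' =>
                  have : nxt b = some ⟨x', hstep b x' hgb⟩ := by
                    simp only [hnxt, hgb]
                    rw [dif_neg (hstep b x' hgb)]
                  simp [hgb, this, S.pure_bind]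
  · intro ξ hξ
    obtain ⟨hpure, hbind, hiter⟩ := hξ
    funext X t
    cases t with
    | some x => exact hpure X x
    | none =>
        have hnor : ¬ ∃ y : X, Reaches
            (fun _ : PUnit => (some (Sum.inr PUnit.unit) : Option (X ⊕ PUnit))) PUnit.unit y := by
          rintro ⟨y, hy⟩
          exact no_reaches_const_inr hy
        have h1 : optIter (fun _ : PUnit => (some (Sum.inr PUnit.unit) : Option (X ⊕ PUnit)))
            PUnit.unit = (none : Option X) := by
          simp only [optIter, dif_neg hnor]
        have h2 := hiter PUnit X (fun _ => some (Sum.inr PUnit.unit)) PUnit.unit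
        rw [h1] at h2
        rw [← h2]
        have : (fun _ : PUnit => ξ (X ⊕ PUnit) (some (Sum.inr PUnit.unit)))
            = fun _ : PUnit => S.pure (Sum.inr PUnit.unit) := by
          funext u
          exact hpure _ _
        rw [this]
        rfl
end

section
/- Let Σ be an endofunctor on Set and T a monad on Set such that the final coalgebra T_Σ X = νγ. T(X + Σγ) exists for every set X, with structure map out_X : T_Σ X ≅ T(X + Σ(T_Σ X)). Then T_Σ carries a monad structure in which: the unit η^ν satisfies out ∘ η^ν = η ∘ inl, and for f : X → T_Σ Y, the Kleisli lifting f^‡ : T_Σ X → T_Σ Y is the unique morphism satisfying out ∘ f^‡ = [out ∘ f, η ∘ inr ∘ Σf^‡]* ∘ out. -/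
/-- A monad on `Set`, given by a Kleisli triple. -/
structure SetMonad where
  T : Type → Type
  pure : ∀ {X : Type}, X → T X
  bind : ∀ {X Y : Type}, T X → (X → T Y) → T Y
  pure_bind : ∀ {X Y : Type} (x : X) (f : X → T Y), bind (pure x) f = f x
  bind_pure : ∀ {X : Type} (t : T X), bind t pure = t
  bind_assoc : ∀ {X Y Z : Type} (t : T X) (f : X → T Y) (g : Y → T Z),
    bind (bind t f) g = bind t fun x => bind (f x) g

/-- The functorial action of a `SetMonad`. -/
def SetMonad.map (M : SetMonad) {X Y : Type} (f : X → Y) : M.T X → M.T Y :=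
  fun t => M.bind t fun x => M.pure (f x)

/-- An endofunctor on `Set`. -/
structure SetFunctor where
  F : Type → Type
  map : ∀ {X Y : Type}, (X → Y) → F X → F Y
  map_id : ∀ {X : Type}, map (id : X → X) = id
  map_comp : ∀ {X Y Z : Type} (f : X → Y) (g : Y → Z), map (g ∘ f) = map g ∘ map f

/-- For each `X`, a final coalgebra `T_Σ X = νγ. T(X + Σγ)` of the functor
`γ ↦ T(X + Σγ)`, with structure map `out` (an isomorphism, by Lambek's lemma). -/
structure ResumptionData (M : SetMonad) (S : SetFunctor) where
  TS : Type → Type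
  out : ∀ {X : Type}, TS X → M.T (X ⊕ S.F (TS X))
  outInv : ∀ {X : Type}, M.T (X ⊕ S.F (TS X)) → TS X
  out_outInv : ∀ {X : Type} (t : M.T (X ⊕ S.F (TS X))), out (outInv t) = t
  outInv_out : ∀ {X : Type} (t : TS X), outInv (out t) = t
  /-- finality: every `T(X + Σ–)`-coalgebra has a unique coalgebra morphism to `out`. -/
  final : ∀ {X Y : Type} (g : Y → M.T (X ⊕ S.F Y)),
    ∃! h : Y → TS X,
      ∀ y, out (h y) = M.bind (g y) fun w => M.pure (Sum.map id (S.map h) w)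

/-- Existence and uniqueness of the Kleisli lifting `f^‡`, via finality. -/
theorem resumption_char (M : SetMonad) (S : SetFunctor) (R : ResumptionData M S)
    {X Y : Type} (f : X → R.TS Y) :
    ∃! k : R.TS X → R.TS Y, ∀ t : R.TS X,
      R.out (k t) = M.bind (R.out t)
        (Sum.elim (fun x => R.out (f x))
          (fun s => M.pure (Sum.inr (S.map k s)))) := by
  classical
  set g : R.TS X ⊕ R.TS Y → M.T (Y ⊕ S.F (R.TS X ⊕ R.TS Y)) :=
    Sum.elim
      (fun t => M.bind (R.out t) (Sum.elim
        (fun x => M.bind (R.out (f x)) (fun v => M.pure (Sum.map id (S.map Sum.inr) v)))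
        (fun s => M.pure (Sum.inr (S.map Sum.inl s)))))
      (fun u => M.bind (R.out u) (fun v => M.pure (Sum.map id (S.map Sum.inr) v)))
    with hg
  obtain ⟨h, hh, huniq⟩ := R.final g
  obtain ⟨h0, _, h0uniq⟩ := R.final (fun u : R.TS Y => R.out u)
  have hid : (fun u : R.TS Y => u) = h0 := by
    apply h0uniq
    intro u
    have e1 : (fun w : Y ⊕ S.F (R.TS Y) =>
        M.pure (Sum.map id (S.map fun u : R.TS Y => u) w)) = M.pure := by
      funext w
      cases w with
      | inl y => rfl
      | inr s =>
        have : S.map (fun u : R.TS Y => u) = id := S.map_id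
        simp [Sum.map, this]
    rw [e1, M.bind_pure]
  have hinr : (fun u : R.TS Y => h (Sum.inr u)) = h0 := by
    apply h0uniq
    intro u
    have e0 := hh (Sum.inr u)
    simp only [hg, Sum.elim_inr, M.bind_assoc, M.pure_bind] at e0
    rw [e0]
    congr 1
    funext w
    cases w with
    | inl y => rfl
    | inr s =>
      have e : S.map (fun u : R.TS Y => h (Sum.inr u))
          = S.map h ∘ S.map (Sum.inr : R.TS Y → R.TS X ⊕ R.TS Y) := S.map_comp _ _
      show M.pure (Sum.inr (S.map h (S.map Sum.inr s)))
          = M.pure (Sum.inr (S.map (fun u : R.TS Y => h (Sum.inr u)) s))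
      rw [e]; rfl
  have hinr' : ∀ u, h (Sum.inr u) = u := by
    intro u
    exact (congrFun (hinr.trans hid.symm) u)
  have hcomp : ∀ (k' : R.TS X ⊕ R.TS Y → R.TS Y) (s : S.F (R.TS Y)),
      (hk' : ∀ u, k' (Sum.inr u) = u) →
      S.map k' (S.map Sum.inr s) = s := by
    intro k' s hk'
    have e := congrFun (S.map_comp (Sum.inr : R.TS Y → R.TS X ⊕ R.TS Y) k') s
    have : k' ∘ Sum.inr = id := by funext u; exact hk' u
    rw [this, S.map_id] at e
    exact e.symm
  refine ⟨fun t => h (Sum.inl t), ?_, ?_⟩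
  · intro t
    have e0 := hh (Sum.inl t)
    simp only [hg, Sum.elim_inl, M.bind_assoc, M.pure_bind] at e0
    rw [e0]
    congr 1
    funext w
    cases w with
    | inl x =>
      simp only [Sum.elim_inl, M.bind_assoc, M.pure_bind]
      have e1 : (fun v : Y ⊕ S.F (R.TS Y) =>
          M.pure (Sum.map id (S.map h) (Sum.map id (S.map Sum.inr) v))) = M.pure := by
        funext v
        cases v with
        | inl y => rfl
        | inr s => simp [Sum.map, hcomp h s hinr']
      rw [e1, M.bind_pure]
    | inr s =>
      simp only [Sum.elim_inr, M.pure_bind]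
      have e : S.map (fun t : R.TS X => h (Sum.inl t))
          = S.map h ∘ S.map (Sum.inl : R.TS X → R.TS X ⊕ R.TS Y) := S.map_comp _ _
      show M.pure (Sum.inr (S.map h (S.map Sum.inl s)))
          = M.pure (Sum.inr (S.map (fun t : R.TS X => h (Sum.inl t)) s))
      rw [e]; rfl
  · intro k hk
    have hmor : (fun y' : R.TS X ⊕ R.TS Y => Sum.elim k (fun u => u) y') = h := by
      apply huniq
      intro y'
      cases y' with
      | inl t =>
        simp only [Sum.elim_inl]
        rw [hk t]
        simp only [hg, Sum.elim_inl, M.bind_assoc, M.pure_bind]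
        congr 1
        funext w
        cases w with
        | inl x =>
          simp only [Sum.elim_inl, M.bind_assoc, M.pure_bind]
          have e1 : (fun v : Y ⊕ S.F (R.TS Y) =>
              M.pure (Sum.map id (S.map (Sum.elim k fun u => u))
                (Sum.map id (S.map Sum.inr) v))) = M.pure := by
            funext v
            cases v with
            | inl y => rfl
            | inr s =>
              simp [Sum.map, hcomp (Sum.elim k fun u => u) s (fun u => rfl)]
          rw [e1, M.bind_pure]
        | inr s =>
          simp only [Sum.elim_inr, M.pure_bind]
          have e : S.map k
              = S.map (fun y' : R.TS X ⊕ R.TS Y => Sum.elim k (fun u => u) y')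
                ∘ S.map (Sum.inl : R.TS X → R.TS X ⊕ R.TS Y) :=
            S.map_comp (Sum.inl : R.TS X → R.TS X ⊕ R.TS Y) (Sum.elim k fun u => u)
          show M.pure (Sum.inr (S.map k s))
              = M.pure (Sum.inr (S.map (fun y' => Sum.elim k (fun u => u) y') (S.map Sum.inl s)))
          rw [e]; rfl
      | inr u =>
        simp only [Sum.elim_inr, hg, M.bind_assoc, M.pure_bind]
        have e1 : (fun v : Y ⊕ S.F (R.TS Y) =>
            M.pure (Sum.map id (S.map (Sum.elim k fun u : R.TS Y => u))
              (Sum.map id (S.map Sum.inr) v))) = M.pure := by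
          funext v
          cases v with
          | inl y => rfl
          | inr s =>
            simp [Sum.map, hcomp (Sum.elim k fun u => u) s (fun u => rfl)]
        rw [e1, M.bind_pure]
    funext t
    exact congrFun hmor (Sum.inl t)

/-- The coinductive resumption construction `T_Σ X = νγ. T(X + Σγ)` carries a monad
structure: the unit satisfies `out ∘ η^ν = η ∘ inl`, and for `f : X → T_Σ Y` the
Kleisli lifting `f^‡` is the unique morphism satisfying
`out ∘ f^‡ = [out ∘ f, η ∘ inr ∘ Σ f^‡]* ∘ out`. -/
theorem resumption_monad (M : SetMonad) (S : SetFunctor) (R : ResumptionData M S) :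
    ∃ (η : ∀ X : Type, X → R.TS X)
      (kl : ∀ X Y : Type, (X → R.TS Y) → R.TS X → R.TS Y),
      -- out ∘ η^ν = η ∘ inl
      (∀ (X : Type) (x : X), R.out (η X x) = M.pure (Sum.inl x)) ∧
      -- f^‡ solves the characteristic equation
      (∀ (X Y : Type) (f : X → R.TS Y) (t : R.TS X),
        R.out (kl X Y f t) =
          M.bind (R.out t)
            (Sum.elim (fun x => R.out (f x))
              (fun s => M.pure (Sum.inr (S.map (kl X Y f) s))))) ∧
      -- and is the unique such solution
      (∀ (X Y : Type) (f : X → R.TS Y) (k : R.TS X → R.TS Y),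
        (∀ t, R.out (k t) =
          M.bind (R.out t)
            (Sum.elim (fun x => R.out (f x))
              (fun s => M.pure (Sum.inr (S.map k s))))) → k = kl X Y f) ∧
      -- monad laws
      (∀ (X : Type) (t : R.TS X), kl X X (η X) t = t) ∧
      (∀ (X Y : Type) (f : X → R.TS Y) (x : X), kl X Y f (η X x) = f x) ∧
      (∀ (X Y Z : Type) (f : Y → R.TS Z) (g : X → R.TS Y) (t : R.TS X),
        kl Y Z f (kl X Y g t) = kl X Z (fun x => kl Y Z f (g x)) t) := by
  classical
  set η : ∀ X : Type, X → R.TS X := fun X x => R.outInv (M.pure (Sum.inl x)) with hη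
  set kl : ∀ X Y : Type, (X → R.TS Y) → R.TS X → R.TS Y :=
    fun X Y f => (resumption_char M S R f).choose with hkl
  have klspec : ∀ (X Y : Type) (f : X → R.TS Y) (t : R.TS X),
      R.out (kl X Y f t) = M.bind (R.out t)
        (Sum.elim (fun x => R.out (f x))
          (fun s => M.pure (Sum.inr (S.map (kl X Y f) s)))) :=
    fun X Y f => (resumption_char M S R f).choose_spec.1
  have kluniq : ∀ (X Y : Type) (f : X → R.TS Y) (k : R.TS X → R.TS Y),
      (∀ t, R.out (k t) = M.bind (R.out t)
        (Sum.elim (fun x => R.out (f x))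
          (fun s => M.pure (Sum.inr (S.map k s))))) → k = kl X Y f :=
    fun X Y f k hk => (resumption_char M S R f).choose_spec.2 k hk
  have hunit : ∀ (X : Type) (x : X), R.out (η X x) = M.pure (Sum.inl x) :=
    fun X x => R.out_outInv _
  refine ⟨η, kl, hunit, klspec, kluniq, ?_, ?_, ?_⟩
  · -- kl (η) = id
    intro X t
    have hid : (fun t : R.TS X => t) = kl X X (η X) := by
      apply kluniq
      intro t
      have e1 : (Sum.elim (fun x : X => R.out (η X x))
          (fun s => M.pure (Sum.inr (S.map (fun t : R.TS X => t) s))))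
          = (M.pure : X ⊕ S.F (R.TS X) → M.T (X ⊕ S.F (R.TS X))) := by
        funext w
        cases w with
        | inl x => exact hunit X x
        | inr s =>
          have : S.map (fun t : R.TS X => t) = id := S.map_id
          rw [this]; rfl
      rw [e1, M.bind_pure]
    exact (congrFun hid t).symm
  · -- kl f (η x) = f x
    intro X Y f x
    have e : R.out (kl X Y f (η X x)) = R.out (f x) := by
      rw [klspec, hunit, M.pure_bind]; rfl
    have := congrArg R.outInv e
    rwa [R.outInv_out, R.outInv_out] at this
  · -- associativity
    intro X Y Z f g t
    have hco : (fun t => kl Y Z f (kl X Y g t)) = kl X Z (fun x => kl Y Z f (g x)) := by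
      apply kluniq
      intro t
      rw [klspec, klspec, M.bind_assoc]
      congr 1
      funext w
      cases w with
      | inl x =>
        simp only [Sum.elim_inl]
        exact (klspec Y Z f (g x)).symm
      | inr s =>
        simp only [Sum.elim_inr, M.pure_bind]
        have e : S.map (fun t => kl Y Z f (kl X Y g t))
            = S.map (kl Y Z f) ∘ S.map (kl X Y g) := S.map_comp _ _
        rw [e]; rfl
    exact congrFun hco t
end

section
/- Let T be a monad and Σ an endofunctor on Set with the coinductive resumption monad T_Σ X = νγ.T(X + Σγ). Define ext : T → T_Σ by ext = out⁻¹ ∘ T inl. Then ext is a monad morphism: ext ∘ η = η^ν and ext ∘ f* = (ext ∘ f)^‡ ∘ ext for all f : X → T Y, where (-)^‡ is the Kleisli lifting of T_Σ characterized by out ∘ g^‡ = [out ∘ g, η ∘ inr ∘ Σ g^‡]* ∘ out. -/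
/-- `ext = out⁻¹ ∘ T inl : T → T_Σ` is a monad morphism: `ext ∘ η = η^ν` and
`ext ∘ f* = (ext ∘ f)^‡ ∘ ext`, where `η^ν` and `(-)^‡` are the unit and Kleisli
lifting of the coinductive resumption monad `T_Σ`. -/
theorem ext_monad_morphism (M : SetMonad) (S : SetFunctor) (R : ResumptionData M S)
    -- the unit of T_Σ, characterized by out ∘ η^ν = η ∘ inl
    (ην : ∀ X : Type, X → R.TS X)
    (hην : ∀ (X : Type) (x : X), R.out (ην X x) = M.pure (Sum.inl x))
    -- the Kleisli lifting of T_Σ, characterized by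
    -- out ∘ f^‡ = [out ∘ f, η ∘ inr ∘ Σ f^‡]* ∘ out
    (kl : ∀ X Y : Type, (X → R.TS Y) → R.TS X → R.TS Y)
    (hkl : ∀ (X Y : Type) (f : X → R.TS Y) (t : R.TS X),
      R.out (kl X Y f t) =
        M.bind (R.out t)
          (Sum.elim (fun x => R.out (f x))
            (fun s => M.pure (Sum.inr (S.map (kl X Y f) s))))) :
    -- ext ∘ η = η^ν
    (∀ (X : Type) (x : X),
      R.outInv (M.map Sum.inl (M.pure x)) = ην X x) ∧
    -- ext ∘ f* = (ext ∘ f)^‡ ∘ ext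
    (∀ (X Y : Type) (f : X → M.T Y) (t : M.T X),
      R.outInv (M.map Sum.inl (M.bind t f)) =
        kl X Y (fun x => R.outInv (M.map Sum.inl (f x)))
          (R.outInv (M.map Sum.inl t))) := by
  have inj : ∀ {X : Type} (a b : R.TS X), R.out a = R.out b → a = b := by
    intro X a b h
    have := congrArg R.outInv h
    rwa [R.outInv_out, R.outInv_out] at this
  constructor
  · intro X x
    apply inj
    rw [R.out_outInv, hην]
    simp [SetMonad.map, M.pure_bind]
  · intro X Y f t
    apply inj
    rw [R.out_outInv, hkl, R.out_outInv]
    simp only [SetMonad.map, M.bind_assoc, M.pure_bind]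
    congr 1
    funext x
    simp [R.out_outInv]
end

section
/- In a hyperextensive category (countable coproducts are disjoint and universal, and summand subobjects are closed under countable disjoint unions), the union of an ω-chain of summands exists, is again a summand, and is stable under pullbacks. -/
/-!
Disjointify the chain: with `Cᵢ` a complement of `Aᵢ`, the layers `D₀ = A₀` and
`Dᵢ₊₁ = Cᵢ ∩ Aᵢ₊₁` are summands of `X`, pairwise disjoint because `Dᵢ ⊆ Aᵢ ⊆ Aⱼ` and
`Dⱼ₊₁ ⊆ Cⱼ` for `i ≤ j`, so `∐ Dᵢ` is a summand of `X`. By universality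
`Aᵢ₊₁ = (Aᵢ ∩ Aᵢ₊₁) ⨿ Dᵢ₊₁`, whence every `Aᵢ` lies in `∐ Dᵢ`, and `∐ Dᵢ` is the least such
subobject since `Dᵢ ⊆ Aᵢ`. Pulling back along `f : W ⟶ X` turns `∐ Dᵢ` into the coproduct of the
pulled-back layers, each of which lies in the pullback of `Aᵢ`.

Disjointness rests on two consequences of the axioms: initial objects are strict, and binary
coproducts are disjoint.
-/

open CategoryTheory Limits

universe v u

variable {C : Type u} [Category.{v} C]

/-- A morphism is a summand if it is a coproduct injection, i.e. it has a cocomplement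
making the pair a binary coproduct. -/
def IsSummand {A X : C} (m : A ⟶ X) : Prop :=
  ∃ (A' : C) (m' : A' ⟶ X), Nonempty (IsColimit (BinaryCofan.mk m m'))

namespace CategoryTheory.Limits.IsColimit

variable {X Y P T : C} {f : X ⟶ P} {g : Y ⟶ P}

/-- `BinaryCofan.IsColimit.desc` with the vertex `P` in its type rather than
`(BinaryCofan.mk f g).pt`, which `simp` cannot see through. -/
def binaryDesc (h : IsColimit (BinaryCofan.mk f g)) (a : X ⟶ T) (b : Y ⟶ T) : P ⟶ T :=
  BinaryCofan.IsColimit.desc h a b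

@[simp]
theorem inl_binaryDesc (h : IsColimit (BinaryCofan.mk f g)) (a : X ⟶ T) (b : Y ⟶ T) :
    f ≫ h.binaryDesc a b = a :=
  BinaryCofan.IsColimit.inl_desc h a b

@[simp]
theorem inr_binaryDesc (h : IsColimit (BinaryCofan.mk f g)) (a : X ⟶ T) (b : Y ⟶ T) :
    g ≫ h.binaryDesc a b = b :=
  BinaryCofan.IsColimit.inr_desc h a b

@[simp]
theorem inl_binaryDesc_assoc (h : IsColimit (BinaryCofan.mk f g)) (a : X ⟶ T) (b : Y ⟶ T)
    {T' : C} (k : T ⟶ T') : f ≫ h.binaryDesc a b ≫ k = a ≫ k :=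
  BinaryCofan.IsColimit.inl_desc_assoc h a b k

@[simp]
theorem inr_binaryDesc_assoc (h : IsColimit (BinaryCofan.mk f g)) (a : X ⟶ T) (b : Y ⟶ T)
    {T' : C} (k : T ⟶ T') : g ≫ h.binaryDesc a b ≫ k = b ≫ k :=
  BinaryCofan.IsColimit.inr_desc_assoc h a b k

theorem binary_hom_ext (h : IsColimit (BinaryCofan.mk f g)) {u v : P ⟶ T}
    (hl : f ≫ u = f ≫ v) (hr : g ≫ u = g ≫ v) : u = v :=
  BinaryCofan.IsColimit.hom_ext h hl hr

end CategoryTheory.Limits.IsColimit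

section Hyperextensive

variable (C) [HasPullbacks C]

def UniversalBinaryCoproducts : Prop :=
  ∀ {A B X W : C} (m : A ⟶ X) (n : B ⟶ X) (f : W ⟶ X),
    Nonempty (IsColimit (BinaryCofan.mk m n)) →
    Nonempty (IsColimit (BinaryCofan.mk (pullback.snd m f) (pullback.snd n f)))

variable [HasColimitsOfShape (Discrete ℕ) C]

def DisjointCountableCoproducts : Prop :=
  ∀ (A : ℕ → C) (i j : ℕ), i ≠ j → Nonempty (IsInitial (pullback (Sigma.ι A i) (Sigma.ι A j)))

def UniversalCountableCoproducts : Prop :=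
  ∀ (A : ℕ → C) {X W : C} (m : ∀ i, A i ⟶ X) (f : W ⟶ X),
    Nonempty (IsColimit (Cofan.mk X m)) →
    Nonempty (IsColimit (Cofan.mk W fun i => pullback.snd (m i) f))

end Hyperextensive

section Strict

variable [HasPullbacks C]

theorem nonempty_isInitial_of_hom_to_isInitial (huniv₂ : UniversalBinaryCoproducts C)
    {Z I : C} (hI : IsInitial I) (f : Z ⟶ I) : Nonempty (IsInitial Z) := by
  have hII : IsColimit (BinaryCofan.mk (𝟙 I) (𝟙 I)) :=
    BinaryCofan.isColimitMk (fun _ => hI.to _) (fun _ => hI.hom_ext _ _)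
      (fun _ => hI.hom_ext _ _) (fun _ _ _ _ => hI.hom_ext _ _)
  -- pulling back `I = I ⨿ I` along `f` exhibits `Z` as `Z ⨿ Z` with equal injections
  obtain ⟨hZZ⟩ := huniv₂ (𝟙 I) (𝟙 I) f ⟨hII⟩
  have hom_ext {T : C} (g h : Z ⟶ T) : g = h := by
    obtain ⟨l, hl, hr⟩ := BinaryCofan.IsColimit.desc' hZZ (pullback.snd (𝟙 I) f ≫ g)
      (pullback.snd (𝟙 I) f ≫ h)
    exact (cancel_epi (pullback.snd (𝟙 I) f)).1 (hl.symm.trans hr)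
  exact ⟨IsInitial.ofUniqueHom (fun T => f ≫ hI.to T) fun _ _ => hom_ext _ _⟩

theorem nonempty_isInitial_pullback_of_factors (huniv₂ : UniversalBinaryCoproducts C)
    {A B U V X : C} {a : A ⟶ X} {b : B ⟶ X} (hab : Nonempty (IsInitial (pullback a b)))
    {u : U ⟶ X} {v : V ⟶ X} {g : U ⟶ A} {h : V ⟶ B} (hu : g ≫ a = u) (hv : h ≫ b = v) :
    Nonempty (IsInitial (pullback u v)) :=
  hab.elim fun hI => nonempty_isInitial_of_hom_to_isInitial huniv₂ hI
    (pullback.map _ _ _ _ g h (𝟙 X) (by simp [hu]) (by simp [hv]))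

theorem nonempty_isInitial_pullback_of_isColimit [HasColimitsOfShape (Discrete ℕ) C]
    (hdisj : DisjointCountableCoproducts C) (huniv₂ : UniversalBinaryCoproducts C)
    {A A' X : C} {a : A ⟶ X} {a' : A' ⟶ X} (hc : IsColimit (BinaryCofan.mk a a')) :
    Nonempty (IsInitial (pullback a a')) := by
  -- compare `X = A ⨿ A'` with the countable coproduct `A ⨿ A' ⨿ A' ⨿ ⋯`
  let B : ℕ → C := fun | 0 => A | _ => A'
  obtain ⟨ψ, hψ₀, hψ₁⟩ := BinaryCofan.IsColimit.desc' hc (Sigma.ι B 0) (Sigma.ι B 1)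
  obtain ⟨hI⟩ := hdisj B 0 1 zero_ne_one
  exact nonempty_isInitial_of_hom_to_isInitial huniv₂ hI
    (pullback.map _ _ _ _ (𝟙 A) (𝟙 A') ψ (by rw [Category.id_comp]; exact hψ₀)
      (by rw [Category.id_comp]; exact hψ₁))

end Strict

namespace IsSummand

variable {A X : C} {m : A ⟶ X}

noncomputable def compl (h : IsSummand m) : C := h.choose

noncomputable def complι (h : IsSummand m) : h.compl ⟶ X := h.choose_spec.choose

theorem nonempty_isColimit (h : IsSummand m) :
    Nonempty (IsColimit (BinaryCofan.mk m h.complι)) :=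
  h.choose_spec.choose_spec

theorem complι_isSummand (h : IsSummand m) : IsSummand h.complι :=
  ⟨A, m, h.nonempty_isColimit.map BinaryCofan.isColimitFlip⟩

theorem pullback_snd [HasPullbacks C] (huniv₂ : UniversalBinaryCoproducts C) (h : IsSummand m)
    {W : C} (f : W ⟶ X) : IsSummand (pullback.snd m f) :=
  ⟨_, _, huniv₂ m h.complι f h.nonempty_isColimit⟩

theorem comp [HasBinaryCoproducts C] {D : C} {e : D ⟶ A} (he : IsSummand e) (hm : IsSummand m) :
    IsSummand (e ≫ m) := by
  obtain ⟨P, p, ⟨hA⟩⟩ := he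
  obtain ⟨A', n', ⟨hX⟩⟩ := hm
  -- `X = (D ⨿ P) ⨿ A'`, so `D` has complement `P ⨿ A'`
  refine ⟨P ⨿ A', coprod.desc (p ≫ m) n', ⟨BinaryCofan.IsColimit.mk _
    (fun a b => hX.binaryDesc (hA.binaryDesc a (coprod.inl ≫ b)) (coprod.inr ≫ b))
    (fun a b => show (e ≫ m) ≫ _ = a by simp)
    (fun a b => show coprod.desc (p ≫ m) n' ≫ _ = b from coprod.hom_ext
      (by simp only [coprod.inl_desc_assoc, Category.assoc, IsColimit.inl_binaryDesc,
        IsColimit.inr_binaryDesc])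
      (by simp only [coprod.inr_desc_assoc, IsColimit.inr_binaryDesc]))
    (fun a b (t : X ⟶ _) ht₁ ht₂ => ?_)⟩⟩
  change (e ≫ m) ≫ t = a at ht₁
  change coprod.desc (p ≫ m) n' ≫ t = b at ht₂
  refine hX.binary_hom_ext (hA.binary_hom_ext ?_ ?_) ?_
  · simpa using ht₁
  · simpa [coprod.inl_desc] using coprod.inl ≫= ht₂
  · simpa [coprod.inr_desc] using coprod.inr ≫= ht₂

end IsSummand

section Pullbacks

variable [HasPullbacks C]

theorem exists_pullback_map_snd {A B X W : C} {a : A ⟶ X} {b : B ⟶ X} (g : A ⟶ B)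
    (hg : g ≫ b = a) (f : W ⟶ X) :
    ∃ k : pullback a f ⟶ pullback b f, k ≫ pullback.snd b f = pullback.snd a f :=
  ⟨pullback.lift (pullback.fst a f ≫ g) (pullback.snd a f)
    (by rw [Category.assoc, hg, pullback.condition]), pullback.lift_snd _ _ _⟩

theorem exists_pullback_sigmaDesc_factor [HasColimitsOfShape (Discrete ℕ) C]
    (hunivℕ : UniversalCountableCoproducts C) {D : ℕ → C} {X W V : C} (d : ∀ i, D i ⟶ X)
    (f : W ⟶ X) (v : V ⟶ W)
    (hv : ∀ i, ∃ k : pullback (d i) f ⟶ V, k ≫ v = pullback.snd (d i) f) :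
    ∃ w : pullback (Sigma.desc d) f ⟶ V, w ≫ v = pullback.snd (Sigma.desc d) f := by
  choose k hk using hv
  set u := Sigma.desc d
  obtain ⟨hQ⟩ := hunivℕ D (Sigma.ι D) (pullback.fst u f) ⟨coproductIsCoproduct D⟩
  let piece (i : ℕ) : pullback (Sigma.ι D i) (pullback.fst u f) ⟶ pullback (d i) f :=
    pullback.lift (pullback.fst _ _) (pullback.snd _ _ ≫ pullback.snd u f) (by
      rw [← Sigma.ι_desc d i, pullback.condition_assoc, Category.assoc, pullback.condition])
  refine ⟨Cofan.IsColimit.desc hQ fun i => piece i ≫ k i,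
    Cofan.IsColimit.hom_ext hQ _ _ fun i => ?_⟩
  rw [Cofan.IsColimit.fac_assoc]
  simp [piece, hk, pullback.lift_snd]

end Pullbacks

theorem exists_comp_eq_of_le {A : ℕ → C} {X : C} (m : ∀ i, A i ⟶ X) (ι : ∀ i, A i ⟶ A (i + 1))
    (hι : ∀ i, ι i ≫ m (i + 1) = m i) {i j : ℕ} (hij : i ≤ j) :
    ∃ g : A i ⟶ A j, g ≫ m j = m i := by
  induction hij with
  | refl => exact ⟨𝟙 _, Category.id_comp _⟩
  | step _ ih =>
    obtain ⟨g, hg⟩ := ih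
    exact ⟨g ≫ ι _, by rw [Category.assoc, hι, hg]⟩

namespace SummandChain

variable [HasPullbacks C] {X : C} {A : ℕ → C} (m : ∀ i, A i ⟶ X) (hm : ∀ i, IsSummand (m i))

noncomputable abbrev layer : ℕ → C
  | 0 => A 0
  | i + 1 => pullback (hm i).complι (m (i + 1))

noncomputable abbrev layerToStage : ∀ i, layer m hm i ⟶ A i
  | 0 => 𝟙 (A 0)
  | _ + 1 => pullback.snd _ _

noncomputable def layerι (i : ℕ) : layer m hm i ⟶ X := layerToStage m hm i ≫ m i

theorem layerι_zero : layerι m hm 0 = m 0 := Category.id_comp _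

theorem layerι_succ (i : ℕ) :
    layerι m hm (i + 1) = pullback.fst (hm i).complι (m (i + 1)) ≫ (hm i).complι :=
  pullback.condition.symm

theorem layerι_isSummand [HasBinaryCoproducts C] (huniv₂ : UniversalBinaryCoproducts C) :
    ∀ i, IsSummand (layerι m hm i)
  | 0 => (layerι_zero m hm).symm ▸ hm 0
  | i + 1 => ((hm i).complι_isSummand.pullback_snd huniv₂ (m (i + 1))).comp (hm (i + 1))

theorem layerι_disjoint_of_lt [HasColimitsOfShape (Discrete ℕ) C]
    (hdisj : DisjointCountableCoproducts C) (huniv₂ : UniversalBinaryCoproducts C)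
    (ι : ∀ i, A i ⟶ A (i + 1)) (hι : ∀ i, ι i ≫ m (i + 1) = m i) {i j : ℕ} (hij : i < j) :
    Nonempty (IsInitial (pullback (layerι m hm i) (layerι m hm j))) := by
  obtain ⟨j, rfl⟩ : ∃ k, j = k + 1 := ⟨j - 1, by omega⟩
  obtain ⟨g, hg⟩ := exists_comp_eq_of_le m ι hι (Nat.le_of_lt_succ hij)
  obtain ⟨hX⟩ := (hm j).nonempty_isColimit
  exact nonempty_isInitial_pullback_of_factors huniv₂
    (nonempty_isInitial_pullback_of_isColimit hdisj huniv₂ hX)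
    (by simp [layerι, hg] : (layerToStage m hm i ≫ g) ≫ m j = _) (layerι_succ m hm j).symm

theorem layerι_disjoint [HasColimitsOfShape (Discrete ℕ) C]
    (hdisj : DisjointCountableCoproducts C) (huniv₂ : UniversalBinaryCoproducts C)
    (ι : ∀ i, A i ⟶ A (i + 1)) (hι : ∀ i, ι i ≫ m (i + 1) = m i) {i j : ℕ} (hij : i ≠ j) :
    Nonempty (IsInitial (pullback (layerι m hm i) (layerι m hm j))) := by
  rcases hij.lt_or_gt with h | h
  · exact layerι_disjoint_of_lt m hm hdisj huniv₂ ι hι h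
  · exact (layerι_disjoint_of_lt m hm hdisj huniv₂ ι hι h).map
      fun hI => hI.ofIso (pullbackSymmetry _ _)

variable [HasColimitsOfShape (Discrete ℕ) C]

theorem exists_comp_sigmaDesc_layerι (huniv₂ : UniversalBinaryCoproducts C) (i : ℕ) :
    ∃ k : A i ⟶ ∐ layer m hm, k ≫ Sigma.desc (layerι m hm) = m i := by
  induction i with
  | zero => exact ⟨Sigma.ι (layer m hm) 0, by simp [layerι_zero]⟩
  | succ i ih =>
    obtain ⟨k, hk⟩ := ih
    -- `A (i+1)` is the disjoint union of its parts inside `A i` and inside the complement of `A i`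
    obtain ⟨hs⟩ := huniv₂ (m i) (hm i).complι (m (i + 1)) (hm i).nonempty_isColimit
    refine ⟨hs.binaryDesc (pullback.fst _ _ ≫ k) (Sigma.ι (layer m hm) (i + 1)),
      hs.binary_hom_ext ?_ ?_⟩
    · simp [hk, pullback.condition]
    · simp [layerι]

theorem exists_sigmaDesc_layerι_factor {V : C} (v : V ⟶ X)
    (hv : ∀ i, ∃ k : A i ⟶ V, k ≫ v = m i) :
    ∃ w : ∐ layer m hm ⟶ V, w ≫ v = Sigma.desc (layerι m hm) := by
  choose k hk using hv
  exact ⟨Sigma.desc fun i => layerToStage m hm i ≫ k i, Sigma.hom_ext _ _ fun i => by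
    simp [layerι, hk]⟩

theorem exists_pullback_sigmaDesc_layerι_factor (hunivℕ : UniversalCountableCoproducts C)
    {W V : C} (f : W ⟶ X) (v : V ⟶ W)
    (hv : ∀ i, ∃ k : pullback (m i) f ⟶ V, k ≫ v = pullback.snd (m i) f) :
    ∃ w : pullback (Sigma.desc (layerι m hm)) f ⟶ V,
      w ≫ v = pullback.snd (Sigma.desc (layerι m hm)) f := by
  refine exists_pullback_sigmaDesc_factor hunivℕ _ f v fun i => ?_
  obtain ⟨k, hk⟩ := hv i
  obtain ⟨e, he⟩ := exists_pullback_map_snd (layerToStage m hm i) (rfl : _ = layerι m hm i) f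
  exact ⟨e ≫ k, by rw [Category.assoc, hk, he]⟩

end SummandChain

theorem hyperextensive_chain_union_general
    [HasPullbacks C] [HasBinaryCoproducts C]
    [HasColimitsOfShape (Discrete ℕ) C]
    -- countable coproducts are disjoint
    (hdisj : ∀ (A : ℕ → C) (i j : ℕ), i ≠ j →
      Nonempty (IsInitial (pullback (Sigma.ι A i) (Sigma.ι A j))))
    -- countable coproducts are universal (stable under pullback)
    (hunivℕ : ∀ (A : ℕ → C) {X W : C} (m : ∀ i, A i ⟶ X) (f : W ⟶ X),
      Nonempty (IsColimit (Cofan.mk X m)) →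
      Nonempty (IsColimit (Cofan.mk W fun i => pullback.snd (m i) f)))
    -- binary coproducts are universal (stable under pullback)
    (huniv₂ : ∀ {A B X W : C} (m : A ⟶ X) (n : B ⟶ X) (f : W ⟶ X),
      Nonempty (IsColimit (BinaryCofan.mk m n)) →
      Nonempty (IsColimit (BinaryCofan.mk (pullback.snd m f) (pullback.snd n f))))
    -- summands are closed under countable disjoint unions
    (hsum : ∀ (A : ℕ → C) (X : C) (m : ∀ i, A i ⟶ X),
      (∀ i, IsSummand (m i)) →
      (∀ i j, i ≠ j → Nonempty (IsInitial (pullback (m i) (m j)))) →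
      IsSummand (Sigma.desc m : (∐ A) ⟶ X))
    -- an ω-chain of summands of X
    {X : C} (A : ℕ → C) (m : ∀ i, A i ⟶ X) (hm : ∀ i, IsSummand (m i))
    (ι : ∀ i, A i ⟶ A (i + 1)) (hι : ∀ i, ι i ≫ m (i + 1) = m i) :
    ∃ (U : C) (u : U ⟶ X),
      -- the union is a summand
      IsSummand u ∧
      -- it contains every member of the chain
      (∀ i, ∃ k : A i ⟶ U, k ≫ u = m i) ∧
      -- and is the least subobject doing so
      (∀ (V : C) (v : V ⟶ X), Mono v → (∀ i, ∃ k : A i ⟶ V, k ≫ v = m i) →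
        ∃ w : U ⟶ V, w ≫ v = u) ∧
      -- the union is stable under pullbacks:
      (∀ (W : C) (f : W ⟶ X),
        -- its pullback is again a summand,
        IsSummand (pullback.snd u f) ∧
        -- containing the pullbacks of the chain,
        (∀ i, ∃ k : pullback (m i) f ⟶ pullback u f,
          k ≫ pullback.snd u f = pullback.snd (m i) f) ∧
        -- and least among monos containing them, i.e. it is the union of the pullbacks
        (∀ (V : C) (v : V ⟶ W), Mono v →
          (∀ i, ∃ k : pullback (m i) f ⟶ V, k ≫ v = pullback.snd (m i) f) →
          ∃ w : pullback u f ⟶ V, w ≫ v = pullback.snd u f)) := by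
  have hunion : IsSummand (Sigma.desc (SummandChain.layerι m hm)) :=
    hsum _ _ _ (SummandChain.layerι_isSummand m hm huniv₂)
      fun _ _ => SummandChain.layerι_disjoint m hm hdisj huniv₂ ι hι
  have hstage := SummandChain.exists_comp_sigmaDesc_layerι m hm huniv₂
  refine ⟨_, _, hunion, hstage, fun V v _ => SummandChain.exists_sigmaDesc_layerι_factor m hm v,
    fun W f => ⟨hunion.pullback_snd huniv₂ f, fun i => ?_,
      fun V v _ => SummandChain.exists_pullback_sigmaDesc_layerι_factor m hm hunivℕ f v⟩⟩
  obtain ⟨k, hk⟩ := hstage i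
  exact exists_pullback_map_snd k hk f

/-- In a hyperextensive category (countable coproducts are disjoint and universal, and
summands are closed under countable disjoint unions), the union of an ω-chain of
summands exists, is again a summand, and is stable under pullbacks. -/
theorem hyperextensive_chain_union
    [HasPullbacks C] [HasInitial C] [HasBinaryCoproducts C]
    [HasColimitsOfShape (Discrete ℕ) C]
    -- countable coproducts are disjoint
    (hdisj : ∀ (A : ℕ → C) (i j : ℕ), i ≠ j →
      Nonempty (IsInitial (pullback (Sigma.ι A i) (Sigma.ι A j))))
    -- countable coproducts are universal (stable under pullback)
    (hunivℕ : ∀ (A : ℕ → C) {X W : C} (m : ∀ i, A i ⟶ X) (f : W ⟶ X),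
      Nonempty (IsColimit (Cofan.mk X m)) →
      Nonempty (IsColimit (Cofan.mk W fun i => pullback.snd (m i) f)))
    -- binary coproducts are universal (stable under pullback)
    (huniv₂ : ∀ {A B X W : C} (m : A ⟶ X) (n : B ⟶ X) (f : W ⟶ X),
      Nonempty (IsColimit (BinaryCofan.mk m n)) →
      Nonempty (IsColimit (BinaryCofan.mk (pullback.snd m f) (pullback.snd n f))))
    -- summands are closed under countable disjoint unions
    (hsum : ∀ (A : ℕ → C) (X : C) (m : ∀ i, A i ⟶ X),
      (∀ i, IsSummand (m i)) →
      (∀ i j, i ≠ j → Nonempty (IsInitial (pullback (m i) (m j)))) →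
      IsSummand (Sigma.desc m : (∐ A) ⟶ X))
    -- an ω-chain of summands of X
    {X : C} (A : ℕ → C) (m : ∀ i, A i ⟶ X) (hm : ∀ i, IsSummand (m i))
    (ι : ∀ i, A i ⟶ A (i + 1)) (hι : ∀ i, ι i ≫ m (i + 1) = m i) :
    ∃ (U : C) (u : U ⟶ X),
      -- the union is a summand
      IsSummand u ∧
      -- it contains every member of the chain
      (∀ i, ∃ k : A i ⟶ U, k ≫ u = m i) ∧
      -- and is the least subobject doing so
      (∀ (V : C) (v : V ⟶ X), Mono v → (∀ i, ∃ k : A i ⟶ V, k ≫ v = m i) →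
        ∃ w : U ⟶ V, w ≫ v = u) ∧
      -- the union is stable under pullbacks:
      (∀ (W : C) (f : W ⟶ X),
        -- its pullback is again a summand,
        IsSummand (pullback.snd u f) ∧
        -- containing the pullbacks of the chain,
        (∀ i, ∃ k : pullback (m i) f ⟶ pullback u f,
          k ≫ pullback.snd u f = pullback.snd (m i) f) ∧
        -- and least among monos containing them, i.e. it is the union of the pullbacks
        (∀ (V : C) (v : V ⟶ W), Mono v →
          (∀ i, ∃ k : pullback (m i) f ⟶ V, k ≫ v = pullback.snd (m i) f) →
          ∃ w : pullback u f ⟶ V, w ≫ v = pullback.snd u f)) :=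
  hyperextensive_chain_union_general hdisj hunivℕ huniv₂ hsum A m hm ι hι
end
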